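/- arXiv:1603.07052 — 4 statements merged into one kernel-verified Lean document; each statement's English description precedes it below -/
import Mathlib

section
/- Let β > 2, γ > 0 and d > 0 be real numbers. Then the improper integral ∫₀^∞ (1 − 1/(1 + γ·d^β·x^{−β}))·x dx converges and equals A(β)·γ^{2/β}·d², where A(β) = (1/β)·Γ(2/β)·Γ(1 − 2/β). (Computation of the interference Laplace-functional exponent J₁ in the proof of Theorem 3, equation (23).) -/
/-!
On `x > 0` the integrand equals `x / (1 + x ^ β / c)` with `c = γ d ^ β`. The substitution
`u = x ^ β / c` turns the integral into `c ^ (2/β) / β · ∫₀^∞ u ^ (2/β - 1) / (1 + u) du`, and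
`t = u / (1 + u)` turns the latter into the Beta integral `B(2/β, 1 - 2/β) = Γ(2/β) Γ(1 - 2/β)`.
-/

open MeasureTheory Set Real

lemma ofReal_rpow_mul_one_sub_rpow {a b x : ℝ} (hx : x ∈ Icc 0 1) :
    ((x ^ (a - 1) * (1 - x) ^ (b - 1) : ℝ) : ℂ)
      = (x : ℂ) ^ ((a : ℂ) - 1) * (1 - (x : ℂ)) ^ ((b : ℂ) - 1) := by
  rw [Complex.ofReal_mul, Complex.ofReal_cpow hx.1, Complex.ofReal_cpow (sub_nonneg.2 hx.2)]
  push_cast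
  rfl

lemma integrableOn_and_integral_Ioo_rpow_mul_one_sub_rpow {a b : ℝ} (ha : 0 < a) (hb : 0 < b) :
    IntegrableOn (fun t : ℝ => t ^ (a - 1) * (1 - t) ^ (b - 1)) (Ioo 0 1) ∧
      ∫ t in Ioo (0 : ℝ) 1, t ^ (a - 1) * (1 - t) ^ (b - 1)
        = Gamma a * Gamma b / Gamma (a + b) := by
  have hre : ∀ x ∈ Ioc (0 : ℝ) 1, x ^ (a - 1) * (1 - x) ^ (b - 1)
      = RCLike.re ((x : ℂ) ^ ((a : ℂ) - 1) * (1 - (x : ℂ)) ^ ((b : ℂ) - 1)) := fun x hx => by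
    rw [← ofReal_rpow_mul_one_sub_rpow (Ioc_subset_Icc_self hx), RCLike.re_to_complex,
      Complex.ofReal_re]
  have hF := (Complex.betaIntegral_convergent (u := a) (v := b) (by simpa) (by simpa)).1
  have hB := Complex.betaIntegral_eq_Gamma_mul_div a b (by simpa) (by simpa)
  rw [Complex.betaIntegral, intervalIntegral.integral_of_le zero_le_one,
    ← setIntegral_congr_fun measurableSet_Ioc
      (fun x hx => ofReal_rpow_mul_one_sub_rpow (Ioc_subset_Icc_self hx)),
    integral_complex_ofReal, ← Complex.ofReal_add] at hB
  simp only [Complex.Gamma_ofReal] at hB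
  rw [← integral_Ioc_eq_integral_Ioo]
  exact ⟨(IntegrableOn.congr_fun hF.re (fun x hx => (hre x hx).symm) measurableSet_Ioc).mono_set
    Ioo_subset_Ioc_self, by exact_mod_cast hB⟩

lemma integrableOn_and_integral_of_image {E : Type*} [NormedAddCommGroup E] [NormedSpace ℝ E]
    [CompleteSpace E] {s : Set ℝ} {f f' : ℝ → ℝ} {g h : ℝ → E} {I : E}
    (hs : MeasurableSet s) (hf' : ∀ x ∈ s, HasDerivWithinAt f (f' x) s x) (hf : InjOn f s)
    (hg : IntegrableOn g (f '' s) ∧ ∫ y in f '' s, g y = I)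
    (hgh : ∀ x ∈ s, |f' x| • g (f x) = h x) :
    IntegrableOn h s ∧ ∫ x in s, h x = I := by
  rw [integrableOn_image_iff_integrableOn_abs_deriv_smul hs hf' hf,
    integral_image_eq_integral_abs_deriv_smul hs hf' hf] at hg
  exact ⟨hg.1.congr_fun hgh hs, (setIntegral_congr_fun hs hgh).symm.trans hg.2⟩

lemma injOn_div_one_add : InjOn (fun u : ℝ => u / (1 + u)) (Ioi 0) := by
  rintro u (hu : 0 < u) v (hv : 0 < v) huv
  have hu' : 1 + u ≠ 0 := by positivity
  have hv' : 1 + v ≠ 0 := by positivity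
  field_simp at huv
  linarith

lemma image_div_one_add_Ioi : (fun u : ℝ => u / (1 + u)) '' Ioi 0 = Ioo 0 1 := by
  ext y
  constructor
  · rintro ⟨u, hu : 0 < u, rfl⟩
    exact ⟨by positivity, (div_lt_one (by positivity)).2 (by linarith)⟩
  · rintro ⟨hy0, hy1⟩
    have h1y : (0 : ℝ) < 1 - y := by linarith
    refine ⟨y / (1 - y), div_pos hy0 h1y, ?_⟩
    field_simp
    ring

lemma integrableOn_and_integral_Ioi_rpow_div_one_add_rpow {a b : ℝ} (ha : 0 < a) (hb : 0 < b) :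
    IntegrableOn (fun u : ℝ => u ^ (a - 1) / (1 + u) ^ (a + b)) (Ioi 0) ∧
      ∫ u in Ioi (0 : ℝ), u ^ (a - 1) / (1 + u) ^ (a + b) = Gamma a * Gamma b / Gamma (a + b) := by
  refine integrableOn_and_integral_of_image measurableSet_Ioi (f' := fun u => 1 / (1 + u) ^ 2)
    (fun u hu => ?_) injOn_div_one_add
    (image_div_one_add_Ioi ▸ integrableOn_and_integral_Ioo_rpow_mul_one_sub_rpow ha hb)
    (fun u hu => ?_)
  · have hu : (0 : ℝ) < u := hu
    refine (((hasDerivAt_id' u).div ((hasDerivAt_id' u).const_add 1)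
      (by positivity)).congr_deriv ?_).hasDerivWithinAt
    ring
  · have hu : (0 : ℝ) < u := hu
    have h1u : (0 : ℝ) < 1 + u := by positivity
    have hpow : (1 + u) ^ 2 * (1 + u) ^ (a - 1) * (1 + u) ^ (b - 1) = (1 + u) ^ (a + b) := by
      rw [← rpow_natCast, ← rpow_add h1u, ← rpow_add h1u]
      congr 1
      push_cast
      ring
    rw [smul_eq_mul, abs_of_pos (by positivity), one_sub_div h1u.ne', add_sub_cancel_right,
      div_rpow hu.le h1u.le, div_rpow zero_le_one h1u.le, one_rpow, ← hpow]
    field_simp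

lemma injOn_const_mul_rpow {k p : ℝ} (hk : k ≠ 0) (hp : p ≠ 0) :
    InjOn (fun x : ℝ => k * x ^ p) (Ioi 0) :=
  fun _ hx _ hy hxy =>
    rpow_left_injOn hp (mem_Ioi.1 hx).le (mem_Ioi.1 hy).le (mul_left_cancel₀ hk hxy)

lemma image_const_mul_rpow_Ioi {k p : ℝ} (hk : 0 < k) (hp : p ≠ 0) :
    (fun x : ℝ => k * x ^ p) '' Ioi 0 = Ioi 0 := by
  ext y
  constructor
  · rintro ⟨x, hx, rfl⟩
    exact mul_pos hk (rpow_pos_of_pos hx p)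
  · intro hy
    have hyk : 0 < y / k := div_pos hy hk
    refine ⟨(y / k) ^ p⁻¹, rpow_pos_of_pos hyk _, ?_⟩
    beta_reduce
    rw [rpow_inv_rpow hyk.le hp]
    field_simp

lemma integrableOn_and_integral_Ioi_rpow_div_one_add_mul_rpow {p q k : ℝ} (hq : 0 < q)
    (hqp : q < p) (hk : 0 < k) :
    IntegrableOn (fun x : ℝ => x ^ (q - 1) / (1 + k * x ^ p)) (Ioi 0) ∧
      ∫ x in Ioi (0 : ℝ), x ^ (q - 1) / (1 + k * x ^ p)
        = Gamma (q / p) * Gamma (1 - q / p) / p * k ^ (-(q / p)) := by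
  have hp : 0 < p := hq.trans hqp
  set s := q / p with hs
  have hs0 : 0 < s := div_pos hq hp
  have hs1 : 0 < 1 - s := sub_pos.2 ((div_lt_one hp).2 hqp)
  obtain ⟨hI, hV⟩ := integrableOn_and_integral_Ioi_rpow_div_one_add_rpow hs0 hs1
  simp only [add_sub_cancel, rpow_one, Gamma_one, div_one] at hI hV
  have hg : IntegrableOn (fun u => (p * k ^ s)⁻¹ * (u ^ (s - 1) / (1 + u)))
        ((fun x => k * x ^ p) '' Ioi 0) ∧
      ∫ u in (fun x => k * x ^ p) '' Ioi 0, (p * k ^ s)⁻¹ * (u ^ (s - 1) / (1 + u))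
        = Gamma s * Gamma (1 - s) / p * k ^ (-s) := by
    rw [image_const_mul_rpow_Ioi hk hp.ne', integral_const_mul, hV, rpow_neg hk.le]
    exact ⟨hI.const_mul _, by ring⟩
  refine integrableOn_and_integral_of_image measurableSet_Ioi
    (fun x hx => ((hasDerivAt_rpow_const (Or.inl (ne_of_gt hx))).const_mul k).hasDerivWithinAt)
    (injOn_const_mul_rpow hk.ne' hp.ne') hg (fun x hx => ?_)
  have hx : 0 < x := hx
  have hxpow : x ^ (p - 1) * x ^ (p * (s - 1)) = x ^ (q - 1) := by
    rw [← rpow_add hx, hs]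
    congr 1
    field_simp
    ring
  have hks : k * k ^ (s - 1) = k ^ s := by rw [rpow_sub_one hk.ne']; field_simp
  rw [smul_eq_mul, abs_of_pos (by positivity), mul_rpow hk.le (rpow_nonneg hx.le _),
    ← rpow_mul hx.le, ← hxpow, ← hks]
  field_simp

/-- Equation (23) of the paper: the interference Laplace-functional exponent `J₁`.
For `β > 2`, `γ > 0`, `d > 0`, the improper integral
`∫₀^∞ (1 - 1/(1 + γ d^β x^{-β})) x dx` converges and equals `A(β) γ^{2/β} d²`,
with `A(β) = (1/β) Γ(2/β) Γ(1 - 2/β)`. -/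
theorem integral_J1 (β γ d : ℝ) (hβ : 2 < β) (hγ : 0 < γ) (hd : 0 < d) :
    IntegrableOn (fun x : ℝ => (1 - 1 / (1 + γ * d ^ β * x ^ (-β))) * x) (Ioi 0) volume ∧
      ∫ x in Ioi (0 : ℝ), (1 - 1 / (1 + γ * d ^ β * x ^ (-β))) * x
        = ((1 / β) * Real.Gamma (2 / β) * Real.Gamma (1 - 2 / β)) * γ ^ (2 / β) * d ^ 2 := by
  have hβ0 : 0 < β := two_pos.trans hβ
  set c := γ * d ^ β
  have hc : 0 < c := mul_pos hγ (rpow_pos_of_pos hd β)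
  have hintegrand : ∀ x ∈ Ioi (0 : ℝ),
      (1 - 1 / (1 + c * x ^ (-β))) * x = x ^ ((2 : ℝ) - 1) / (1 + c⁻¹ * x ^ β) := by
    intro x hx
    have hxβ : 0 < x ^ β := rpow_pos_of_pos hx β
    rw [rpow_neg (le_of_lt hx), show (2 : ℝ) - 1 = 1 by norm_num, rpow_one]
    field_simp
    ring
  have hconst : c⁻¹ ^ (-(2 / β)) = γ ^ (2 / β) * d ^ 2 := by
    rw [inv_rpow hc.le, rpow_neg hc.le, inv_inv, mul_rpow hγ.le (rpow_nonneg hd.le β),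
      ← rpow_mul hd.le, mul_div_cancel₀ _ hβ0.ne', rpow_two]
  obtain ⟨hI, hV⟩ :=
    integrableOn_and_integral_Ioi_rpow_div_one_add_mul_rpow two_pos hβ (inv_pos.2 hc)
  refine ⟨hI.congr_fun (fun x hx => (hintegrand x hx).symm) measurableSet_Ioi, ?_⟩
  rw [setIntegral_congr_fun measurableSet_Ioi hintegrand, hV, hconst]
  ring
end

section
/- Let β > 2, γ > 0 and d > 0 be real numbers. Then the improper integral ∫_d^∞ (1 − 1/(1 + γ·d^β·x^{−β}))·x dx converges and equals (d²/2)·u(γ, β), where u(γ, β) := γ^{2/β} · ∫_{γ^{−2/β}}^∞ (1 + t^{β/2})^{−1} dt. (Computation of the exponent J₂ in the proof of Corollary 4, equation (33), where interferers lie beyond the nearest serving RRH at distance d.) -/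
/-!
Substituting `t = γ^{-2/β} (x/d)²` turns the integrand into `(d²/2) γ^{2/β}` times
`(1 + t^{β/2})⁻¹ dt` and maps `(d, ∞)` onto `(γ^{-2/β}, ∞)`; the latter integrand is
`O(t^{-β/2})` with `β/2 > 1`, which gives integrability.
-/

open MeasureTheory Set Filter Real

section SquareSubstitution

variable {E : Type*} [NormedAddCommGroup E] [NormedSpace ℝ E] {a b : ℝ}

theorem image_mul_sq_Ioi (ha : 0 < a) (hb : 0 ≤ b) :
    (fun x : ℝ => a * x ^ 2) '' Ioi b = Ioi (a * b ^ 2) :=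
  (by fun_prop : Continuous fun x : ℝ => a * x ^ 2).continuousOn.image_Ioi_of_strictMonoOn
    (fun _ hx _ _ hxy =>
      mul_lt_mul_of_pos_left (pow_lt_pow_left₀ hxy (hb.trans hx) two_ne_zero) ha)
    ((tendsto_pow_atTop two_ne_zero).const_mul_atTop ha)

theorem hasDerivWithinAt_mul_sq (s : Set ℝ) (x : ℝ) :
    HasDerivWithinAt (fun x : ℝ => a * x ^ 2) (2 * a * x) s x := by
  simpa [mul_comm, mul_left_comm] using ((hasDerivAt_pow 2 x).const_mul a).hasDerivWithinAt

theorem injOn_mul_sq_Ioi (ha : 0 < a) (hb : 0 ≤ b) :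
    InjOn (fun x : ℝ => a * x ^ 2) (Ioi b) :=
  fun _ hx _ hy hxy =>
    (pow_left_inj₀ (hb.trans hx.le) (hb.trans hy.le) two_ne_zero).mp (mul_left_cancel₀ ha.ne' hxy)

theorem integrableOn_comp_mul_sq_Ioi_iff (ha : 0 < a) (hb : 0 ≤ b) (g : ℝ → E) :
    IntegrableOn (fun x => (2 * a * x) • g (a * x ^ 2)) (Ioi b) ↔
      IntegrableOn g (Ioi (a * b ^ 2)) := by
  rw [← image_mul_sq_Ioi ha hb,
    integrableOn_image_iff_integrableOn_abs_deriv_smul measurableSet_Ioi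
      (fun x _ => hasDerivWithinAt_mul_sq _ x) (injOn_mul_sq_Ioi ha hb)]
  refine integrableOn_congr_fun (fun x (hx : b < x) => ?_) measurableSet_Ioi
  rw [abs_of_pos (by have := hb.trans_lt hx; positivity)]

theorem integral_comp_mul_sq_Ioi (ha : 0 < a) (hb : 0 ≤ b) (g : ℝ → E) :
    ∫ x in Ioi b, (2 * a * x) • g (a * x ^ 2) = ∫ t in Ioi (a * b ^ 2), g t := by
  rw [← image_mul_sq_Ioi ha hb, integral_image_eq_integral_abs_deriv_smul measurableSet_Ioi
    (fun x _ => hasDerivWithinAt_mul_sq _ x) (injOn_mul_sq_Ioi ha hb)]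
  refine setIntegral_congr_fun measurableSet_Ioi (fun x (hx : b < x) => ?_)
  rw [abs_of_pos (by have := hb.trans_lt hx; positivity)]

end SquareSubstitution

theorem integrableOn_Ioi_inv_one_add_rpow {p c : ℝ} (hp : 1 < p) (hc : 0 < c) :
    IntegrableOn (fun t : ℝ => (1 + t ^ p)⁻¹) (Ioi c) := by
  refine (integrableOn_Ioi_rpow_of_lt (neg_lt_neg hp) hc).mono' ?_ ?_
  · refine ContinuousOn.aestronglyMeasurable (fun t (ht : c < t) => ?_) measurableSet_Ioi
    have h0 : 0 < t := hc.trans ht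
    have : 0 < t ^ p := rpow_pos_of_pos h0 p
    exact (continuousAt_const.add (continuousAt_id.rpow_const (.inl h0.ne'))).inv₀
      (by simp only [Pi.add_apply, id]; positivity) |>.continuousWithinAt
  · filter_upwards [ae_restrict_mem measurableSet_Ioi] with t (ht : c < t)
    have h0 : 0 < t := hc.trans ht
    have : 0 < t ^ p := rpow_pos_of_pos h0 p
    rw [norm_inv, Real.norm_of_nonneg (by positivity), rpow_neg h0.le]
    gcongr
    linarith

theorem rpow_div_two_mul_sq {β c x : ℝ} (hc : 0 ≤ c) (hx : 0 ≤ x) :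
    (c * x ^ 2) ^ (β / 2) = c ^ (β / 2) * x ^ β := by
  rw [mul_rpow hc (by positivity), ← rpow_natCast, ← rpow_mul hx]
  norm_num [mul_div_cancel₀]

theorem J2_integrand_eq {β γ d x : ℝ} (hβ : β ≠ 0) (hγ : 0 < γ) (hd : 0 < d)
    (hx : 0 < x) :
    (1 - 1 / (1 + γ * d ^ β * x ^ (-β))) * x =
      x * (1 + (γ ^ (-(2 / β)) / d ^ 2 * x ^ 2) ^ (β / 2))⁻¹ := by
  have hsub : (γ ^ (-(2 / β)) / d ^ 2 * x ^ 2) ^ (β / 2) = γ⁻¹ * (x / d) ^ β := by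
    rw [div_mul_eq_mul_div, mul_div_assoc, ← div_pow,
      rpow_div_two_mul_sq (by positivity) (by positivity), ← rpow_mul hγ.le, neg_mul,
      div_mul_div_cancel₀' two_ne_zero, div_self hβ, rpow_neg_one]
  have : 0 < x ^ β := rpow_pos_of_pos hx β
  have : 0 < d ^ β := rpow_pos_of_pos hd β
  rw [hsub, rpow_neg hx.le, div_rpow hx.le hd.le]
  field_simp
  ring

/-- Equation (33) of the paper: the exponent `J₂`, where interferers lie beyond the
nearest serving RRH at distance `d`.  For `β > 2`, `γ > 0`, `d > 0`, the improper
integral `∫_d^∞ (1 - 1/(1 + γ d^β x^{-β})) x dx` converges and equals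
`(d²/2) u(γ, β)`, where `u(γ, β) = γ^{2/β} ∫_{γ^{-2/β}}^∞ (1 + t^{β/2})⁻¹ dt`. -/
theorem integral_J2 (β γ d : ℝ) (hβ : 2 < β) (hγ : 0 < γ) (hd : 0 < d) :
    IntegrableOn (fun x : ℝ => (1 - 1 / (1 + γ * d ^ β * x ^ (-β))) * x) (Ioi d) volume ∧
      ∫ x in Ioi d, (1 - 1 / (1 + γ * d ^ β * x ^ (-β))) * x
        = (d ^ 2 / 2) *
            (γ ^ (2 / β) * ∫ t in Ioi (γ ^ (-(2 / β))), (1 + t ^ (β / 2))⁻¹) := by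
  set a := γ ^ (-(2 / β)) / d ^ 2 with ha_def
  have ha : 0 < a := by positivity
  have had : a * d ^ 2 = γ ^ (-(2 / β)) := div_mul_cancel₀ _ (by positivity)
  have hg : IntegrableOn (fun t : ℝ => (1 + t ^ (β / 2))⁻¹) (Ioi (a * d ^ 2)) :=
    had ▸ integrableOn_Ioi_inv_one_add_rpow (by linarith) (by positivity)
  have hinv : (2 * a)⁻¹ = d ^ 2 / 2 * γ ^ (2 / β) := by
    rw [ha_def, rpow_neg hγ.le]
    field_simp
  have hF : EqOn (fun x : ℝ => (1 - 1 / (1 + γ * d ^ β * x ^ (-β))) * x)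
      (fun x => (2 * a)⁻¹ * ((2 * a * x) • (1 + (a * x ^ 2) ^ (β / 2))⁻¹)) (Ioi d) :=
    fun x (hx : d < x) => by
      dsimp only
      rw [J2_integrand_eq (by positivity) hγ hd (hd.trans hx), ← ha_def, smul_eq_mul]
      field_simp
  refine ⟨IntegrableOn.congr_fun
    (((integrableOn_comp_mul_sq_Ioi_iff ha hd.le _).mpr hg).const_mul _) hF.symm
    measurableSet_Ioi, ?_⟩
  rw [setIntegral_congr_fun measurableSet_Ioi hF, integral_const_mul,
    integral_comp_mul_sq_Ioi ha hd.le fun t => (1 + t ^ (β / 2))⁻¹, had, hinv, mul_assoc]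
end

section
/- Let L ≥ 1 and for each l = 1, …, L let X_l be a nonnegative random variable, let μ > 0, a > 0, and let 0 < θ_l^T ≤ θ_l^C be QoS exponents. With E_l(θ) = −(1/(θ·a))·ln E[(1 + X_l)^{−μ·θ·a}], define for P ∈ [0, 1] the average effective capacity Ē(P) = P·Σ_{l=1}^L E_l(θ_l^T) + (1 − P)·Σ_{l=1}^L E_l(θ_l^C). Then Ē is nondecreasing on [0, 1]; in particular the effective-capacity gain of cluster caching ΔĒ = Ē(P_hit) − Ē(0) = P_hit·Σ_{l=1}^L ( E_l(θ_l^T) − E_l(θ_l^C) ) is nonnegative and nondecreasing in the hit ratio P_hit. (Equations (19) and (25): the performance gain of cluster content caching grows with the hit ratio.) -/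
open MeasureTheory

/-! Raising the QoS exponent `θ` raises the exponent `c = μ θ a` of the negative moment
`M(c) = 𝔼[(1 + X)^{-c}]`, and by Lyapunov's inequality (Jensen for the concave map `y ↦ y^p`,
`p = c₁ / c₂ ≤ 1`) the normalized log-moment `log M(c) / c` is nondecreasing in `c`. Hence
`E(θ) = -μ · log M(μ θ a) / (μ θ a)` is nonincreasing in `θ`, so `E_l(θ_l^T) ≥ E_l(θ_l^C)`, and
`Ē` is an affine function of `P` with slope `Σ_l (E_l(θ_l^T) - E_l(θ_l^C)) ≥ 0`. -/

/-- The effective capacity `E(θ) = -(1/(θ a)) ln 𝔼[(1 + X)^{-μ θ a}]` of a block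
fading channel with (nonnegative) receive SINR `X`, spectral efficiency `μSE` and
`a = W T̄`. -/
noncomputable def effectiveCapacity {Ω : Type*} [MeasurableSpace Ω]
    (μ : Measure Ω) (X : Ω → ℝ) (μSE a θ : ℝ) : ℝ :=
  -(1 / (θ * a)) * Real.log (∫ ω, (1 + X ω) ^ (-(μSE * θ * a)) ∂μ)

section Lyapunov

variable {Ω : Type*} [MeasurableSpace Ω] {μ : Measure Ω}

lemma integral_pos_of_forall_pos [NeZero μ] {f : Ω → ℝ} (hf : Integrable f μ)
    (hpos : ∀ ω, 0 < f ω) : 0 < ∫ ω, f ω ∂μ := by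
  rw [integral_pos_iff_support_of_nonneg (fun ω => (hpos ω).le) hf,
    Function.support_eq_univ fun ω => (hpos ω).ne']
  simpa using NeZero.ne μ

lemma integral_rpow_le_rpow_integral [IsProbabilityMeasure μ] {Y : Ω → ℝ} {p : ℝ}
    (hp0 : 0 ≤ p) (hp1 : p ≤ 1) (hY0 : ∀ ω, 0 ≤ Y ω) (hY : Integrable Y μ)
    (hYp : Integrable (fun ω => Y ω ^ p) μ) :
    ∫ ω, Y ω ^ p ∂μ ≤ (∫ ω, Y ω ∂μ) ^ p :=
  (Real.concaveOn_rpow hp0 hp1).le_map_integral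
    (Real.continuous_rpow_const hp0).continuousOn isClosed_Ici
    (Filter.Eventually.of_forall hY0) hY hYp

variable {X : Ω → ℝ}

lemma integrable_one_add_rpow_neg [IsFiniteMeasure μ] (hX : Measurable X)
    (hX0 : ∀ ω, 0 ≤ X ω) {c : ℝ} (hc : 0 ≤ c) :
    Integrable (fun ω => (1 + X ω) ^ (-c)) μ := by
  refine Integrable.of_bound (by fun_prop : Measurable _).aestronglyMeasurable 1
    (Filter.Eventually.of_forall fun ω => ?_)
  have hX1 : 1 ≤ 1 + X ω := le_add_of_nonneg_right (hX0 ω)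
  rw [Real.norm_of_nonneg (Real.rpow_nonneg (by linarith) _)]
  exact Real.rpow_le_one_of_one_le_of_nonpos hX1 (neg_nonpos.2 hc)

lemma log_integral_one_add_rpow_neg_div_le [IsProbabilityMeasure μ] (hX : Measurable X)
    (hX0 : ∀ ω, 0 ≤ X ω) {c₁ c₂ : ℝ} (hc₁ : 0 < c₁) (hc : c₁ ≤ c₂) :
    Real.log (∫ ω, (1 + X ω) ^ (-c₁) ∂μ) / c₁ ≤ Real.log (∫ ω, (1 + X ω) ^ (-c₂) ∂μ) / c₂ := by
  have hc₂ : 0 < c₂ := hc₁.trans_le hc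
  have hint : ∀ c : ℝ, 0 ≤ c → Integrable (fun ω => (1 + X ω) ^ (-c)) μ :=
    fun c hc => integrable_one_add_rpow_neg hX hX0 hc
  have hbase : ∀ ω, 0 < 1 + X ω := fun ω => by linarith [hX0 ω]
  have hM : ∀ c : ℝ, 0 ≤ c → 0 < ∫ ω, (1 + X ω) ^ (-c) ∂μ := fun c hc =>
    integral_pos_of_forall_pos (hint c hc) fun ω => Real.rpow_pos_of_pos (hbase ω) _
  have hpow : ∀ ω, ((1 + X ω) ^ (-c₂)) ^ (c₁ / c₂) = (1 + X ω) ^ (-c₁) := fun ω => by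
    rw [← Real.rpow_mul (hbase ω).le]
    field_simp
  have hlyap : ∫ ω, (1 + X ω) ^ (-c₁) ∂μ ≤ (∫ ω, (1 + X ω) ^ (-c₂) ∂μ) ^ (c₁ / c₂) := by
    simpa only [hpow] using integral_rpow_le_rpow_integral (μ := μ) (by positivity)
      (div_le_one_of_le₀ hc hc₂.le) (fun ω => (Real.rpow_pos_of_pos (hbase ω) _).le)
      (hint c₂ hc₂.le) (by simpa only [hpow] using hint c₁ hc₁.le)
  have hlog := Real.log_le_log (hM c₁ hc₁.le) hlyap
  rw [Real.log_rpow (hM c₂ hc₂.le)] at hlog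
  calc Real.log (∫ ω, (1 + X ω) ^ (-c₁) ∂μ) / c₁
      ≤ c₁ / c₂ * Real.log (∫ ω, (1 + X ω) ^ (-c₂) ∂μ) / c₁ := by gcongr
    _ = Real.log (∫ ω, (1 + X ω) ^ (-c₂) ∂μ) / c₂ := by field_simp

end Lyapunov

lemma antitoneOn_effectiveCapacity {Ω : Type*} [MeasurableSpace Ω] (μ : Measure Ω)
    [IsProbabilityMeasure μ] {X : Ω → ℝ} (hX : Measurable X) (hX0 : ∀ ω, 0 ≤ X ω)
    {μSE a : ℝ} (hμSE : 0 < μSE) (ha : 0 < a) :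
    AntitoneOn (effectiveCapacity μ X μSE a) (Set.Ioi 0) := by
  intro θ₁ (hθ₁ : 0 < θ₁) θ₂ _ hθ
  have hform : ∀ θ, effectiveCapacity μ X μSE a θ =
      -μSE * (Real.log (∫ ω, (1 + X ω) ^ (-(μSE * θ * a)) ∂μ) / (μSE * θ * a)) := fun θ => by
    unfold effectiveCapacity
    field_simp
  rw [hform, hform]
  exact mul_le_mul_of_nonpos_left
    (log_integral_one_add_rpow_neg_div_le hX hX0 (by positivity) (by gcongr)) (by linarith)

theorem averageEffectiveCapacity_monotone_in_hit_ratio_general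
    {Ω : Type*} [MeasurableSpace Ω] (μ : Measure Ω) [IsProbabilityMeasure μ]
    (L : ℕ) (X : Fin L → Ω → ℝ)
    (hX : ∀ l, Measurable (X l)) (hX0 : ∀ l ω, 0 ≤ X l ω)
    (μSE a : ℝ) (hμSE : 0 < μSE) (ha : 0 < a)
    (θT θC : Fin L → ℝ) (hθT : ∀ l, 0 < θT l) (hθ : ∀ l, θT l ≤ θC l) :
    let Ebar : ℝ → ℝ := fun P =>
      P * ∑ l, effectiveCapacity μ (X l) μSE a (θT l) +
        (1 - P) * ∑ l, effectiveCapacity μ (X l) μSE a (θC l)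
    (∀ P₁ P₂ : ℝ, 0 ≤ P₁ → P₁ ≤ P₂ → P₂ ≤ 1 → Ebar P₁ ≤ Ebar P₂) ∧
      ∀ Phit : ℝ, 0 ≤ Phit → Phit ≤ 1 →
        Ebar Phit - Ebar 0
            = Phit * ∑ l, (effectiveCapacity μ (X l) μSE a (θT l) -
                effectiveCapacity μ (X l) μSE a (θC l)) ∧
          0 ≤ Ebar Phit - Ebar 0 := by
  intro Ebar
  have hgap : ∑ l, effectiveCapacity μ (X l) μSE a (θC l) ≤
      ∑ l, effectiveCapacity μ (X l) μSE a (θT l) :=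
    Finset.sum_le_sum fun l _ => antitoneOn_effectiveCapacity μ (hX l) (hX0 l) hμSE ha
      (hθT l) ((hθT l).trans_le (hθ l)) (hθ l)
  refine ⟨fun P₁ P₂ _ hP _ => ?_, fun P hP _ => ?_⟩
  · simp only [Ebar]
    nlinarith
  · have hgain : Ebar P - Ebar 0 = P * ∑ l, (effectiveCapacity μ (X l) μSE a (θT l) -
        effectiveCapacity μ (X l) μSE a (θC l)) := by
      simp only [Ebar, Finset.sum_sub_distrib]
      ring
    refine ⟨hgain, ?_⟩
    rw [hgain, Finset.sum_sub_distrib]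
    exact mul_nonneg hP (sub_nonneg.2 hgap)

/-- Equations (19) and (25) of the paper.  With `X l` the SINR of content object
`S_l` and QoS exponents `0 < θT l ≤ θC l` for cluster- and cloud-served requests,
the average effective capacity
`Ē(P) = P Σ_l E_l(θT l) + (1 - P) Σ_l E_l(θC l)` is nondecreasing on `[0, 1]`; in
particular the gain of cluster caching
`ΔĒ = Ē(P_hit) - Ē(0) = P_hit Σ_l (E_l(θT l) - E_l(θC l))` is nonnegative (and
nondecreasing in the hit ratio `P_hit`). -/
theorem averageEffectiveCapacity_monotone_in_hit_ratio
    {Ω : Type*} [MeasurableSpace Ω] (μ : Measure Ω) [IsProbabilityMeasure μ]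
    (L : ℕ) (hL : 1 ≤ L) (X : Fin L → Ω → ℝ)
    (hX : ∀ l, Measurable (X l)) (hX0 : ∀ l ω, 0 ≤ X l ω)
    (μSE a : ℝ) (hμSE : 0 < μSE) (ha : 0 < a)
    (θT θC : Fin L → ℝ) (hθT : ∀ l, 0 < θT l) (hθ : ∀ l, θT l ≤ θC l) :
    let Ebar : ℝ → ℝ := fun P =>
      P * ∑ l, effectiveCapacity μ (X l) μSE a (θT l) +
        (1 - P) * ∑ l, effectiveCapacity μ (X l) μSE a (θC l)
    (∀ P₁ P₂ : ℝ, 0 ≤ P₁ → P₁ ≤ P₂ → P₂ ≤ 1 → Ebar P₁ ≤ Ebar P₂) ∧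
      ∀ Phit : ℝ, 0 ≤ Phit → Phit ≤ 1 →
        Ebar Phit - Ebar 0
            = Phit * ∑ l, (effectiveCapacity μ (X l) μSE a (θT l) -
                effectiveCapacity μ (X l) μSE a (θC l)) ∧
          0 ≤ Ebar Phit - Ebar 0 :=
  averageEffectiveCapacity_monotone_in_hit_ratio_general μ L X hX hX0 μSE a hμSE ha θT θC hθT hθ
end

section
/- Let N be a finite set of players and v : Finset N → ℝ a coalition value function with v(∅) = 0. Let Π be a partition of N into nonempty blocks, let A, B be two distinct blocks of Π, and let k ∈ A. If v(B ∪ {k}) + v(A \ {k}) > v(A) + v(B) (condition C2), then the partition Π′ obtained from Π by moving k from A to B (replacing the blocks A and B by A \ {k} and B ∪ {k}, and deleting A \ {k} if it is empty) satisfies Σ_{C ∈ Π′} v(C) > Σ_{C ∈ Π} v(C). (A single hedonic move satisfying condition C2 strictly increases the total coalition utility.) -/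
/-!
The two partitions share every block other than `A, B` and their replacements, so the
difference of the total utilities is exactly the C2 gain. The only care needed is that
the new blocks are not already blocks of the old partition (a `Finset` of blocks would
merge them); this follows from disjointness and C2. A vanished `A \ {k}` contributes `v ∅ = 0`.
-/

namespace Finset

variable {α M : Type*}

theorem eq_of_mem_of_mem_of_pairwise_disjoint {P : Finset (Finset α)}
    (hdisj : ∀ C ∈ P, ∀ D ∈ P, C ≠ D → Disjoint C D) {C D : Finset α} (hC : C ∈ P)
    (hD : D ∈ P) {x : α} (hxC : x ∈ C) (hxD : x ∈ D) : C = D :=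
  by_contra fun h => disjoint_left.1 (hdisj C hC D hD h) hxC hxD

variable [DecidableEq α] [AddCommMonoid M]

theorem sum_union_ite_nonempty (v : Finset α → M) (hv : v ∅ = 0) {t : Finset (Finset α)}
    {X : Finset α} (hX : X.Nonempty → X ∉ t) :
    ∑ C ∈ t ∪ (if X.Nonempty then {X} else ∅), v C = ∑ C ∈ t, v C + v X := by
  split_ifs with h
  · rw [sum_union (disjoint_singleton_right.2 (hX h)), sum_singleton]
  · rw [union_empty, not_nonempty_iff_eq_empty.1 h, hv, add_zero]

theorem sum_replace_two_blocks_add (v : Finset α → M) (hv : v ∅ = 0) {P : Finset (Finset α)}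
    {A B A' B' : Finset α} (hA : A ∈ P) (hB : B ∈ P) (hAB : A ≠ B) (hA' : A'.Nonempty → A' ∉ P)
    (hB' : B' ∉ P) (hA'B' : A' ≠ B') :
    ∑ C ∈ insert B' ((P.erase A).erase B ∪ if A'.Nonempty then {A'} else ∅), v C + (v A + v B) =
      ∑ C ∈ P, v C + (v A' + v B') := by
  have hR : (P.erase A).erase B ⊆ P := (erase_subset _ _).trans (erase_subset _ _)
  have hB'R : B' ∉ (P.erase A).erase B ∪ if A'.Nonempty then {A'} else ∅ := by
    rw [mem_union, not_or]
    refine ⟨fun h => hB' (hR h), ?_⟩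
    split_ifs
    exacts [fun h => hA'B' (mem_singleton.1 h).symm, notMem_empty B']
  rw [sum_insert hB'R, sum_union_ite_nonempty v hv fun h hmem => hA' h (hR hmem),
    ← sum_erase_add P v hA, ← sum_erase_add (P.erase A) v (mem_erase.2 ⟨hAB.symm, hB⟩)]
  abel

end Finset

theorem hedonic_move_increases_total_utility_general
    {N : Type*} [DecidableEq N]
    (v : Finset N → ℝ) (hv : v ∅ = 0)
    (prt : Finset (Finset N))
    (hdisj : ∀ C ∈ prt, ∀ D ∈ prt, C ≠ D → Disjoint C D)
    (A B : Finset N) (hA : A ∈ prt) (hB : B ∈ prt) (hAB : A ≠ B)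
    (k : N) (hk : k ∈ A)
    (hC2 : v A + v B < v (insert k B) + v (A.erase k)) :
    ∑ C ∈ prt, v C <
      ∑ C ∈ insert (insert k B)
          (((prt.erase A).erase B) ∪
            (if (A.erase k).Nonempty then {A.erase k} else ∅)), v C := by
  have hkB : k ∉ B := fun h =>
    hAB (Finset.eq_of_mem_of_mem_of_pairwise_disjoint hdisj hA hB hk h)
  -- Were `insert k B` a block, it would be `A`; then `A.erase k = B` and C2 reads `x < x`.
  have hkB_notMem : insert k B ∉ prt := fun h => by
    have hkBA : insert k B = A := Finset.eq_of_mem_of_mem_of_pairwise_disjoint hdisj h hA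
      (Finset.mem_insert_self k B) hk
    rw [← hkBA, Finset.erase_insert hkB, add_comm] at hC2
    exact hC2.false
  have hAk_notMem : (A.erase k).Nonempty → A.erase k ∉ prt := fun ⟨x, hx⟩ h =>
    (Finset.erase_ssubset hk).ne
      (Finset.eq_of_mem_of_mem_of_pairwise_disjoint hdisj h hA hx (Finset.mem_of_mem_erase hx))
  have hAk_ne : A.erase k ≠ insert k B := fun h =>
    Finset.notMem_erase k A (h ▸ Finset.mem_insert_self k B)
  have := Finset.sum_replace_two_blocks_add v hv hA hB hAB hAk_notMem hkB_notMem hAk_ne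
  linarith

/-- A single hedonic move satisfying condition C2 strictly increases the total
coalition utility.  `prt` is a partition of the finite player set `N` into nonempty,
pairwise disjoint blocks covering `N`; player `k ∈ A` moves from block `A` to block
`B`, yielding the partition in which `A` and `B` are replaced by `A \ {k}` and
`B ∪ {k}` (with `A \ {k}` deleted if it is empty). -/
theorem hedonic_move_increases_total_utility
    {N : Type*} [Fintype N] [DecidableEq N]
    (v : Finset N → ℝ) (hv : v ∅ = 0)
    (prt : Finset (Finset N))
    (hne : ∀ C ∈ prt, C.Nonempty)
    (hdisj : ∀ C ∈ prt, ∀ D ∈ prt, C ≠ D → Disjoint C D)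
    (hcover : prt.sup id = Finset.univ)
    (A B : Finset N) (hA : A ∈ prt) (hB : B ∈ prt) (hAB : A ≠ B)
    (k : N) (hk : k ∈ A)
    (hC2 : v A + v B < v (insert k B) + v (A.erase k)) :
    ∑ C ∈ prt, v C <
      ∑ C ∈ insert (insert k B)
          (((prt.erase A).erase B) ∪
            (if (A.erase k).Nonempty then {A.erase k} else ∅)), v C :=
  hedonic_move_increases_total_utility_general v hv prt hdisj A B hA hB hAB k hk hC2
end
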